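/- ℓ₁ (Lee) minimum distance of twisted GRS codes: Let q be prime, let α₁,…,α_n ∈ F_q be distinct and nonzero (so n ≤ q−1), and let 1 ≤ k ≤ n. Then every nonzero codeword c of the code GRS_{q,k}(α,α) = {(α₁u(α₁),…,α_n u(α_n)) : u ∈ F_q[X], deg u < k} satisfies ‖c‖₁ ≥ ((n+1)² − k²)/(4k), and this quantity is strictly greater than ((1 − R²)/(4R))·n where R = k/n; here ‖c‖₁ is computed by lifting each coordinate of c to its representative in [−q/2, q/2) ∩ ℤ. -/

import Mathlib

/-!
On the evaluation points, `c i = s` says that `α i` is a root of `X * u - C s`, a nonzero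
polynomial of degree at most `k` when `s ≠ 0`, while `c i = 0` says that `α i` is a root of `u`
(as `α i ≠ 0`). So each value occurs at most `k` times in `c`, and `0` fewer than `k` times; the
same holds for the lifts. Hence fewer than `k (2t+1)` lifted coordinates lie in `[-t, t]`, so at
least `n + 1 - k (2t+1)` of them exceed `t` in absolute value. Summing these counts over `t < T`
bounds `‖c‖₁` below by `T (n+1) - k T²`, and `T = ⌊(n+1+k)/(2k)⌋` makes this at least
`((n+1)² - k²)/(4k)`.
-/

noncomputable section

/-- The lift of `x : ZMod q` to its distinguished integer representative in
`[−q/2, q/2) ∩ ℤ`. -/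
def zlift (q : ℕ) (x : ZMod q) : ℤ :=
  if 2 * x.val < q then (x.val : ℤ) else (x.val : ℤ) - q

open Finset Polynomial

lemma zlift_leftInverse (q : ℕ) [NeZero q] :
    Function.LeftInverse ((↑) : ℤ → ZMod q) (zlift q) := by
  intro x
  unfold zlift
  split <;> simp

lemma card_filter_comp_eq_le {ι β γ : Type*} [Fintype ι] [DecidableEq β] [DecidableEq γ]
    {g : β → γ} {h : γ → β} (hgh : Function.LeftInverse h g) (c : ι → β) (s : γ) :
    #{i | g (c i) = s} ≤ #{i | c i = h s} :=
  card_le_card fun i hi => by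
    simp only [mem_filter, mem_univ, true_and] at hi ⊢
    rw [← hi, hgh]

section Evaluation

variable {R ι : Type*} [CommRing R] [IsDomain R] [Fintype ι] [DecidableEq R] {α : ι → R}

lemma card_filter_eval_eq_zero_le_natDegree (hα : Function.Injective α) {p : R[X]}
    (hp : p ≠ 0) :
    #{i | p.eval (α i) = 0} ≤ p.natDegree :=
  calc #{i | p.eval (α i) = 0} ≤ #p.roots.toFinset :=
        card_le_card_of_injOn α (fun i hi => by simp_all) hα.injOn
    _ ≤ p.natDegree := (Multiset.toFinset_card_le _).trans (card_roots' p)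

lemma card_filter_twisted_eval_eq_zero_lt (hα : Function.Injective α) (hα0 : ∀ i, α i ≠ 0)
    {u : R[X]} (hu0 : u ≠ 0) {k : ℕ} (hu : u.natDegree < k) :
    #{i | α i * u.eval (α i) = 0} < k :=
  calc #{i | α i * u.eval (α i) = 0} = #{i | u.eval (α i) = 0} := by
        simp only [mul_eq_zero, hα0, false_or]
    _ < k := (card_filter_eval_eq_zero_le_natDegree hα hu0).trans_lt hu

lemma card_filter_twisted_eval_eq_le (hα : Function.Injective α) (hα0 : ∀ i, α i ≠ 0)
    {u : R[X]} (hu0 : u ≠ 0) {k : ℕ} (hu : u.natDegree < k) (s : R) :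
    #{i | α i * u.eval (α i) = s} ≤ k := by
  obtain rfl | hs := eq_or_ne s 0
  · exact (card_filter_twisted_eval_eq_zero_lt hα hα0 hu0 hu).le
  · have hp0 : X * u - C s ≠ 0 := fun h => hs <| by
      simpa [mul_coeff_zero] using congrArg (coeff · 0) h
    calc #{i | α i * u.eval (α i) = s} = #{i | (X * u - C s : R[X]).eval (α i) = 0} := by
          simp only [eval_sub, eval_mul, eval_X, eval_C, sub_eq_zero]
      _ ≤ (X * u - C s).natDegree := card_filter_eval_eq_zero_le_natDegree hα hp0
      _ ≤ k := by
          refine (natDegree_sub_le _ _).trans (max_le ?_ (by simp))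
          rw [natDegree_X_mul hu0]
          exact hu

end Evaluation

section Counting

variable {ι : Type*} [Fintype ι]

lemma sum_range_card_filter_lt_le (g : ι → ℕ) (T : ℕ) :
    ∑ t ∈ range T, #{i | t < g i} ≤ ∑ i, g i := by
  simp only [card_filter]
  rw [sum_comm]
  gcongr with i
  rw [← card_filter]
  calc #{t ∈ range T | t < g i} ≤ #(range (g i)) :=
        card_le_card fun t ht => by simp only [mem_filter, mem_range] at ht ⊢; exact ht.2
    _ = g i := card_range _

variable {f : ι → ℤ} {k : ℕ}

lemma card_filter_natAbs_le_lt (hfib : ∀ s, #{i | f i = s} ≤ k) (hzero : #{i | f i = 0} < k)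
    (t : ℕ) : #{i | (f i).natAbs ≤ t} < k * (2 * t + 1) := by
  set S : Finset ι := {i | (f i).natAbs ≤ t}
  have hmaps : ∀ i ∈ S, f i ∈ Icc (-(t : ℤ)) t := by
    intro i hi
    simp only [S, mem_filter, mem_univ, true_and, mem_Icc] at hi ⊢
    omega
  have hsub (s : ℤ) : #{i ∈ S | f i = s} ≤ #{i | f i = s} :=
    card_le_card (filter_subset_filter _ (subset_univ _))
  calc #S = ∑ s ∈ Icc (-(t : ℤ)) t, #{i ∈ S | f i = s} := card_eq_sum_card_fiberwise hmaps
    _ < ∑ _s ∈ Icc (-(t : ℤ)) t, k :=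
        sum_lt_sum (fun s _ => (hsub s).trans (hfib s)) ⟨0, by simp, (hsub 0).trans_lt hzero⟩
    _ = k * (2 * t + 1) := by
        rw [sum_const, Int.card_Icc, smul_eq_mul, mul_comm]
        congr 1
        omega

lemma sq_card_add_one_le (hfib : ∀ s, #{i | f i = s} ≤ k) (hzero : #{i | f i = 0} < k) :
    (Fintype.card ι + 1) ^ 2 ≤ k ^ 2 + 4 * k * ∑ i, (f i).natAbs := by
  set N := Fintype.card ι + 1
  have hlevel (t : ℕ) : N ≤ k * (2 * t + 1) + #{i | t < (f i).natAbs} := by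
    have hsplit := card_filter_add_card_filter_not (s := univ) fun i => (f i).natAbs ≤ t
    simp only [not_le, card_univ] at hsplit
    have := card_filter_natAbs_le_lt hfib hzero t
    omega
  have hlayers (T : ℕ) : T * N ≤ k * T ^ 2 + ∑ t ∈ range T, #{i | t < (f i).natAbs} := by
    induction T with
    | zero => simp
    | succ T ih =>
      rw [sum_range_succ]
      nlinarith [hlevel T]
  set T := (N + k) / (2 * k)
  have hT := (hlayers T).trans (add_le_add_right (sum_range_card_filter_lt_le _ T) _)
  have hlow : 2 * k * T ≤ N + k := Nat.mul_div_le _ _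
  have hhigh : N + k < 2 * k * (T + 1) := Nat.lt_mul_div_succ _ (by omega)
  zify at hT hlow hhigh ⊢
  nlinarith [mul_nonneg (sub_nonneg.2 hlow) (sub_nonneg.2 hhigh.le)]

end Counting

lemma rate_bound_lt_of_pos {n k : ℝ} (hn : 0 < n) (hk : 0 < k) :
    (1 - (k / n) ^ 2) / (4 * (k / n)) * n < ((n + 1) ^ 2 - k ^ 2) / (4 * k) := by
  have hrw : (1 - (k / n) ^ 2) / (4 * (k / n)) * n = (n ^ 2 - k ^ 2) / (4 * k) := by
    field_simp
  rw [hrw]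
  gcongr
  linarith

theorem ell1_min_dist_twisted_GRS_general (q : ℕ) (hq : Nat.Prime q) (n k : ℕ)
    (α : Fin n → ZMod q) (hinj : Function.Injective α) (hα0 : ∀ i, α i ≠ 0)
    (u : Polynomial (ZMod q)) (hu : u.degree < (k : WithBot ℕ))
    (c : Fin n → ZMod q) (hc : ∀ i, c i = α i * Polynomial.eval (α i) u)
    (hc0 : c ≠ 0) :
    (((n : ℝ) + 1) ^ 2 - (k : ℝ) ^ 2) / (4 * (k : ℝ)) ≤
        ∑ i, |(zlift q (c i) : ℝ)| ∧
      (1 - ((k : ℝ) / (n : ℝ)) ^ 2) / (4 * ((k : ℝ) / (n : ℝ))) * (n : ℝ) <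
        (((n : ℝ) + 1) ^ 2 - (k : ℝ) ^ 2) / (4 * (k : ℝ)) := by
  have : Fact q.Prime := ⟨hq⟩
  obtain rfl : c = fun i => α i * u.eval (α i) := funext hc
  have hu0 : u ≠ 0 := by
    rintro rfl
    exact hc0 (funext fun i => by simp)
  have hudeg : u.natDegree < k := (natDegree_lt_iff_degree_lt hu0).2 hu
  have hn : 0 < n := Nat.pos_of_ne_zero (by rintro rfl; exact hc0 (Subsingleton.elim _ _))
  have hfib (s : ℤ) := (card_filter_comp_eq_le (zlift_leftInverse q) _ s).trans
    (card_filter_twisted_eval_eq_le hinj hα0 hu0 hudeg _)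
  have hzero := (card_filter_comp_eq_le (zlift_leftInverse q) _ 0).trans_lt <| by
    rw [Int.cast_zero]
    exact card_filter_twisted_eval_eq_zero_lt hinj hα0 hu0 hudeg
  have hbound := sq_card_add_one_le hfib hzero
  have hk : (0 : ℝ) < k := by exact_mod_cast hudeg.pos
  refine ⟨?_, rate_bound_lt_of_pos (by exact_mod_cast hn) hk⟩
  rw [div_le_iff₀ (by positivity)]
  have := (Nat.cast_le (α := ℝ)).2 hbound
  push_cast [Nat.cast_natAbs, Fintype.card_fin] at this
  linarith

/-- ℓ₁ (Lee) minimum distance of twisted GRS codes: for prime `q`, distinct nonzero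
evaluation points `α`, and `1 ≤ k ≤ n`, every nonzero codeword
`c = (α₁u(α₁),…,α_n u(α_n))` with `deg u < k` satisfies
`‖c‖₁ ≥ ((n+1)² − k²)/(4k) > ((1 − R²)/(4R))·n`, `R = k/n`. -/
theorem ell1_min_dist_twisted_GRS (q : ℕ) (hq : Nat.Prime q) (n k : ℕ)
    (hk1 : 1 ≤ k) (hkn : k ≤ n)
    (α : Fin n → ZMod q) (hinj : Function.Injective α) (hα0 : ∀ i, α i ≠ 0)
    (u : Polynomial (ZMod q)) (hu : u.degree < (k : WithBot ℕ))
    (c : Fin n → ZMod q) (hc : ∀ i, c i = α i * Polynomial.eval (α i) u)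
    (hc0 : c ≠ 0) :
    (((n : ℝ) + 1) ^ 2 - (k : ℝ) ^ 2) / (4 * (k : ℝ)) ≤
        ∑ i, |(zlift q (c i) : ℝ)| ∧
      (1 - ((k : ℝ) / (n : ℝ)) ^ 2) / (4 * ((k : ℝ) / (n : ℝ))) * (n : ℝ) <
        (((n : ℝ) + 1) ^ 2 - (k : ℝ) ^ 2) / (4 * (k : ℝ)) :=
  ell1_min_dist_twisted_GRS_general q hq n k α hinj hα0 u hu c hc hc0

end
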